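/- Let G be a weak bicritical graph. Then every connected component of G (as an induced subgraph) is weak bicritical. -/
import Mathlib


open SimpleGraph Set

/-- `S` is a dominating set of the induced subgraph of `G` on the vertex set `A`:
`S ⊆ A` and every vertex of `A` is in the closed neighborhood of some vertex of `S`. -/
def IsDomOn {V : Type*} (G : SimpleGraph V) (A S : Set V) : Prop :=
  S ⊆ A ∧ ∀ v ∈ A, ∃ s ∈ S, s = v ∨ G.Adj s v

/-- The domination number of the induced subgraph of `G` on the vertex set `A`. -/
noncomputable def domNumOn {V : Type*} (G : SimpleGraph V) (A : Set V) : ℕ :=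
  sInf {n | ∃ S : Set V, IsDomOn G A S ∧ S.ncard = n}

/-- The domination number of `G`. -/
noncomputable def domNum {V : Type*} (G : SimpleGraph V) : ℕ :=
  domNumOn G Set.univ

/-- `y` is a critical vertex of the induced subgraph of `G` on `A`:
deleting `y` decreases the domination number. -/
def IsCritVertexOn {V : Type*} (G : SimpleGraph V) (A : Set V) (y : V) : Prop :=
  domNumOn G (A \ {y}) < domNumOn G A

/-- The induced subgraph of `G` on `A` is critical: all its vertices are critical. -/
def CriticalOn {V : Type*} (G : SimpleGraph V) (A : Set V) : Prop :=
  ∀ y ∈ A, IsCritVertexOn G A y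

/-- The induced subgraph of `G` on `A` is weak bicritical: no vertex deletion increases the
domination number (`V⁺ = ∅`), and deleting any vertex that keeps the domination number
unchanged (a vertex of `V⁰`) yields a critical graph. -/
def WeakBicriticalOn {V : Type*} (G : SimpleGraph V) (A : Set V) : Prop :=
  (∀ y ∈ A, domNumOn G (A \ {y}) ≤ domNumOn G A) ∧
  (∀ y ∈ A, domNumOn G (A \ {y}) = domNumOn G A → CriticalOn G (A \ {y}))

lemma isDomOn_self {V : Type*} (G : SimpleGraph V) (A : Set V) : IsDomOn G A A :=
  ⟨le_refl _, fun v hv => ⟨v, hv, Or.inl rfl⟩⟩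

lemma domNumOn_exists {V : Type*} [Fintype V] (G : SimpleGraph V) (A : Set V) :
    ∃ S : Set V, IsDomOn G A S ∧ S.ncard = domNumOn G A := by
  have : domNumOn G A ∈ {n | ∃ S : Set V, IsDomOn G A S ∧ S.ncard = n} :=
    Nat.sInf_mem ⟨A.ncard, A, isDomOn_self G A, rfl⟩
  exact this

lemma domNumOn_le {V : Type*} (G : SimpleGraph V) {A S : Set V} (h : IsDomOn G A S) :
    domNumOn G A ≤ S.ncard :=
  Nat.sInf_le ⟨S, h, rfl⟩

/-- Additivity over a separated union. -/
lemma domNumOn_union {V : Type*} [Fintype V] (G : SimpleGraph V) {A B : Set V}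
    (hdisj : Disjoint A B) (hsep : ∀ a ∈ A, ∀ b ∈ B, ¬ G.Adj a b) :
    domNumOn G (A ∪ B) = domNumOn G A + domNumOn G B := by
  apply le_antisymm
  · obtain ⟨S, hS, hScard⟩ := domNumOn_exists G A
    obtain ⟨T, hT, hTcard⟩ := domNumOn_exists G B
    have hST : IsDomOn G (A ∪ B) (S ∪ T) := by
      constructor
      · exact union_subset_union hS.1 hT.1
      · rintro v (hv | hv)
        · obtain ⟨s, hs, h⟩ := hS.2 v hv
          exact ⟨s, Or.inl hs, h⟩
        · obtain ⟨s, hs, h⟩ := hT.2 v hv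
          exact ⟨s, Or.inr hs, h⟩
    calc domNumOn G (A ∪ B) ≤ (S ∪ T).ncard := domNumOn_le G hST
      _ = S.ncard + T.ncard := by
          rw [Set.ncard_union_eq (hdisj.mono hS.1 hT.1) (Set.toFinite S) (Set.toFinite T)]
      _ = _ := by rw [hScard, hTcard]
  · obtain ⟨S, hS, hScard⟩ := domNumOn_exists G (A ∪ B)
    have hSA : IsDomOn G A (S ∩ A) := by
      refine ⟨inter_subset_right, fun v hv => ?_⟩
      obtain ⟨s, hs, h⟩ := hS.2 v (Or.inl hv)
      have hsA : s ∈ A := by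
        rcases hS.1 hs with hA | hB
        · exact hA
        · rcases h with rfl | hadj
          · exact absurd hv (disjoint_right.mp hdisj hB)
          · exact absurd hadj.symm (hsep v hv s hB)
      exact ⟨s, ⟨hs, hsA⟩, h⟩
    have hSB : IsDomOn G B (S ∩ B) := by
      refine ⟨inter_subset_right, fun v hv => ?_⟩
      obtain ⟨s, hs, h⟩ := hS.2 v (Or.inr hv)
      have hsB : s ∈ B := by
        rcases hS.1 hs with hA | hB
        · rcases h with rfl | hadj
          · exact absurd hv (disjoint_left.mp hdisj hA)
          · exact absurd hadj (hsep s hA v hv)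
        · exact hB
      exact ⟨s, ⟨hs, hsB⟩, h⟩
    calc domNumOn G A + domNumOn G B ≤ (S ∩ A).ncard + (S ∩ B).ncard :=
            add_le_add (domNumOn_le G hSA) (domNumOn_le G hSB)
      _ = ((S ∩ A) ∪ (S ∩ B)).ncard := by
          rw [Set.ncard_union_eq (hdisj.mono inter_subset_right inter_subset_right)
            (Set.toFinite _) (Set.toFinite _)]
      _ = S.ncard := by
          congr 1
          rw [← Set.inter_union_distrib_left]
          exact Set.inter_eq_left.mpr hS.1
      _ = _ := hScard

/-- Let G be a weak bicritical graph. Then every connected component of G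
(as an induced subgraph) is weak bicritical. -/
theorem stmt_5 {V : Type*} [Fintype V] (G : SimpleGraph V)
    (hwb : WeakBicriticalOn G Set.univ) :
    ∀ c : G.ConnectedComponent, WeakBicriticalOn G c.supp := by
  intro c
  set A := c.supp with hA
  set B := c.suppᶜ with hB
  have hsep : ∀ a ∈ A, ∀ b ∈ B, ¬ G.Adj a b := by
    intro a ha b hb hadj
    apply hb
    rw [SimpleGraph.ConnectedComponent.mem_supp_iff] at ha ⊢
    rw [← ha]
    exact SimpleGraph.ConnectedComponent.sound hadj.symm.reachable
  have hdisj : Disjoint A B := disjoint_compl_right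
  have hsplit : ∀ C : Set V, C ⊆ A → domNumOn G (C ∪ B) = domNumOn G C + domNumOn G B := by
    intro C hC
    exact domNumOn_union G (hdisj.mono_left hC) (fun a ha b hb => hsep a (hC ha) b hb)
  have huniv : (Set.univ : Set V) = A ∪ B := (Set.union_compl_self A).symm
  have hdel : ∀ y ∈ A, (Set.univ : Set V) \ {y} = (A \ {y}) ∪ B := by
    intro y hy
    ext v
    simp only [Set.mem_diff, Set.mem_univ, Set.mem_union, Set.mem_singleton_iff, true_and,
      hB, Set.mem_compl_iff]
    constructor
    · intro hne
      by_cases hvA : v ∈ A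
      · exact Or.inl ⟨hvA, hne⟩
      · exact Or.inr hvA
    · rintro (⟨_, hne⟩ | hvB)
      · exact hne
      · rintro rfl; exact hvB hy
  have htotal : domNumOn G Set.univ = domNumOn G A + domNumOn G B := by
    rw [huniv]; exact hsplit A (le_refl _)
  constructor
  · intro y hy
    have h1 := hwb.1 y (Set.mem_univ y)
    rw [hdel y hy, hsplit (A \ {y}) diff_subset, htotal] at h1
    omega
  · intro y hy heq z hz
    have heq' : domNumOn G (Set.univ \ {y}) = domNumOn G Set.univ := by
      rw [hdel y hy, hsplit (A \ {y}) diff_subset, htotal, heq]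
    have hcrit := hwb.2 y (Set.mem_univ y) heq' z
      (by rw [hdel y hy]; exact Or.inl hz)
    unfold IsCritVertexOn at hcrit ⊢
    have e1 : ((Set.univ : Set V) \ {y}) \ {z} = ((A \ {y}) \ {z}) ∪ B := by
      rw [hdel y hy]
      ext v
      simp only [Set.mem_diff, Set.mem_union, Set.mem_singleton_iff]
      constructor
      · rintro ⟨hA' | hvB, hne⟩
        · exact Or.inl ⟨hA', hne⟩
        · exact Or.inr hvB
      · rintro (⟨hA', hne⟩ | hvB)
        · exact ⟨Or.inl hA', hne⟩
        · refine ⟨Or.inr hvB, ?_⟩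
          rintro rfl
          exact hvB hz.1
    rw [e1, hsplit ((A \ {y}) \ {z}) (diff_subset.trans diff_subset),
      hdel y hy, hsplit (A \ {y}) diff_subset] at hcrit
    omega
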